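/- Let (L, {-,-}, ▲, α, β) be a BiHom-Lie bialgebra with both α and β invertible. Define Δ := (α⁻¹⊗β⁻¹)∘▲ and [x,y] := {α⁻¹(x), β⁻¹(y)}. Then (L, [-,-], Δ) is a Lie bialgebra. -/
import Mathlib

set_option maxSynthPendingDepth 2

open TensorProduct

variable {K : Type} [Field K] {L : Type} [AddCommGroup L] [Module K L]
variable {V : Type} [AddCommGroup V] [Module K V]

/-- The flip map on `L ⊗ L`. -/
noncomputable def tau (K L : Type) [Field K] [AddCommGroup L] [Module K L] :
    L ⊗[K] L →ₗ[K] L ⊗[K] L := (TensorProduct.comm K L L).toLinearMap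

/-- The cyclic permutation `x ⊗ (y ⊗ z) ↦ z ⊗ (x ⊗ y)` on `L ⊗ (L ⊗ L)`. -/
noncomputable def cyc (K L : Type) [Field K] [AddCommGroup L] [Module K L] :
    L ⊗[K] (L ⊗[K] L) →ₗ[K] L ⊗[K] (L ⊗[K] L) :=
  (TensorProduct.comm K (L ⊗[K] L) L).toLinearMap ∘ₗ
    (TensorProduct.assoc K L L L).symm.toLinearMap

/-- The pairing `⟨f ⊗ g, -⟩ : L ⊗ L → K`. -/
noncomputable def pair (f g : Module.Dual K L) : L ⊗[K] L →ₗ[K] K :=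
  TensorProduct.lift ((LinearMap.mul K K).compl₁₂ f g)

/-- The transpose (dual) of an endomorphism. -/
noncomputable def tpose (f : L →ₗ[K] L) : Module.Dual K L →ₗ[K] Module.Dual K L :=
  Module.Dual.transpose (R := K) f

/-- The dual representation map `ρ*` with `⟨ρ*(x)v*, v⟩ = −⟨v*, ρ(x)v⟩`. -/
noncomputable def negDualRep (ρ : L →ₗ[K] V →ₗ[K] V) :
    L →ₗ[K] Module.Dual K V →ₗ[K] Module.Dual K V :=
  -(LinearMap.comp (Module.Dual.transpose (R := K)) ρ :
      L →ₗ[K] Module.Dual K V →ₗ[K] Module.Dual K V)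

/-- BiHom-Lie algebra conditions. -/
def IsBiHomLie (b : L →ₗ[K] L →ₗ[K] L) (α β : L →ₗ[K] L) : Prop :=
  (∀ x, α (β x) = β (α x)) ∧
  (∀ x y, α (b x y) = b (α x) (α y)) ∧
  (∀ x y, β (b x y) = b (β x) (β y)) ∧
  (∀ x y, b (β x) (α y) = - b (β y) (α x)) ∧
  (∀ x y z, b (β (β x)) (b (β y) (α z)) + b (β (β y)) (b (β z) (α x)) +
      b (β (β z)) (b (β x) (α y)) = 0)

/-- The map `(id ⊗ β ⊗ α)(β² ⊗ Δ) ∘ Δ`. -/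
noncomputable def coA (Δ : L →ₗ[K] L ⊗[K] L) (α β : L →ₗ[K] L) :
    L →ₗ[K] L ⊗[K] (L ⊗[K] L) :=
  TensorProduct.map LinearMap.id (TensorProduct.map β α) ∘ₗ
    TensorProduct.map (β ∘ₗ β) Δ ∘ₗ Δ

/-- BiHom-Lie coalgebra conditions. -/
def IsBiHomLieCoalg (Δ : L →ₗ[K] L ⊗[K] L) (α β : L →ₗ[K] L) : Prop :=
  (∀ x, α (β x) = β (α x)) ∧
  Δ ∘ₗ α = TensorProduct.map α α ∘ₗ Δ ∧
  Δ ∘ₗ β = TensorProduct.map β β ∘ₗ Δ ∧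
  TensorProduct.map β α ∘ₗ Δ + tau K L ∘ₗ TensorProduct.map β α ∘ₗ Δ = 0 ∧
  coA Δ α β + cyc K L ∘ₗ coA Δ α β + cyc K L ∘ₗ cyc K L ∘ₗ coA Δ α β = 0

/-- The map `(id ⊗ Δ) ∘ Δ`. -/
noncomputable def coA0 (Δ : L →ₗ[K] L ⊗[K] L) : L →ₗ[K] L ⊗[K] (L ⊗[K] L) :=
  TensorProduct.map LinearMap.id Δ ∘ₗ Δ

/-- Lie coalgebra conditions. -/
def IsLieCoalg (Δ : L →ₗ[K] L ⊗[K] L) : Prop :=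
  Δ + tau K L ∘ₗ Δ = 0 ∧
  coA0 Δ + cyc K L ∘ₗ coA0 Δ + cyc K L ∘ₗ cyc K L ∘ₗ coA0 Δ = 0

/-- Lie algebra conditions on a bilinear bracket. -/
def IsLieAlg (b : L →ₗ[K] L →ₗ[K] L) : Prop :=
  (∀ x y, b x y = - b y x) ∧
  (∀ x y z, b x (b y z) + b y (b z x) + b z (b x y) = 0)

/-- The Lie bialgebra 1-cocycle compatibility condition. -/
def IsLieBialgCocycle (b : L →ₗ[K] L →ₗ[K] L) (Δ : L →ₗ[K] L ⊗[K] L) : Prop :=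
  ∀ x y, Δ (b x y) =
    TensorProduct.map (b x) LinearMap.id (Δ y) + TensorProduct.map LinearMap.id (b x) (Δ y) -
    TensorProduct.map (b y) LinearMap.id (Δ x) - TensorProduct.map LinearMap.id (b y) (Δ x)

/-- Nijenhuis BiHom-Lie algebra conditions. -/
def IsNijBiHomLie (b : L →ₗ[K] L →ₗ[K] L) (N α β : L →ₗ[K] L) : Prop :=
  IsBiHomLie b α β ∧ (∀ x, α (N x) = N (α x)) ∧ (∀ x, β (N x) = N (β x)) ∧
  (∀ x y, b (N x) (N y) = N (b (N x) y + b x (N y)) - N (N (b x y)))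

/-- Nijenhuis BiHom-Lie coalgebra conditions. -/
def IsNijBiHomLieCoalg (Δ : L →ₗ[K] L ⊗[K] L) (N α β : L →ₗ[K] L) : Prop :=
  IsBiHomLieCoalg Δ α β ∧ (∀ x, α (N x) = N (α x)) ∧ (∀ x, β (N x) = N (β x)) ∧
  TensorProduct.map N N ∘ₗ Δ + Δ ∘ₗ (N ∘ₗ N) =
    TensorProduct.map N LinearMap.id ∘ₗ Δ ∘ₗ N + TensorProduct.map LinearMap.id N ∘ₗ Δ ∘ₗ N

/-- Representation of a BiHom-Lie algebra. -/
def IsBiHomRep (b : L →ₗ[K] L →ₗ[K] L) (α β : L →ₗ[K] L)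
    (ρ : L →ₗ[K] V →ₗ[K] V) (p q : V →ₗ[K] V) : Prop :=
  (∀ v, p (q v) = q (p v)) ∧
  (∀ x v, p (ρ x v) = ρ (α x) (p v)) ∧
  (∀ x v, q (ρ x v) = ρ (β x) (q v)) ∧
  (∀ x y v, ρ (b (β x) y) (q v) = ρ (α (β x)) (ρ y v) - ρ (β y) (ρ (α x) v))

/-- Representation of a Nijenhuis BiHom-Lie algebra. -/
def IsNijBiHomRep (b : L →ₗ[K] L →ₗ[K] L) (N α β : L →ₗ[K] L)
    (ρ : L →ₗ[K] V →ₗ[K] V) (η p q : V →ₗ[K] V) : Prop :=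
  IsBiHomRep b α β ρ p q ∧
  (∀ v, η (p v) = p (η v)) ∧ (∀ v, η (q v) = q (η v)) ∧
  (∀ x v, ρ (N x) (η v) = η (ρ (N x) v) + η (ρ x (η v)) - η (η (ρ x v)))

/-- Differential Lie algebra of weight `l`. -/
def IsDiffLie (b : L →ₗ[K] L →ₗ[K] L) (d : L →ₗ[K] L) (l : K) : Prop :=
  IsLieAlg b ∧ ∀ x y, d (b x y) = b (d x) y + b x (d y) + l • b (d x) (d y)

/-- Lie algebra representation. -/
def IsLieRep (b : L →ₗ[K] L →ₗ[K] L) (ρ : L →ₗ[K] V →ₗ[K] V) : Prop :=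
  ∀ x y v, ρ (b x y) v = ρ x (ρ y v) - ρ y (ρ x v)

/-- Representation of a differential Lie algebra of weight `l`. -/
def IsDiffLieRep (b : L →ₗ[K] L →ₗ[K] L) (d : L →ₗ[K] L) (l : K)
    (ρ : L →ₗ[K] V →ₗ[K] V) (ξ : V →ₗ[K] V) : Prop :=
  IsLieRep b ρ ∧ ∀ x v, ξ (ρ x v) = ρ (d x) v + ρ x (ξ v) + l • ρ (d x) (ξ v)

/-- Semidirect-product bracket
`[(x,a),(y,b)] = ([x,y], ρ(x)b − ρ(g y)(h a))`. -/
noncomputable def sdBracket (b : L →ₗ[K] L →ₗ[K] L) (ρ : L →ₗ[K] V →ₗ[K] V)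
    (g : L →ₗ[K] L) (h : V →ₗ[K] V) : (L × V) →ₗ[K] (L × V) →ₗ[K] L × V :=
  (b.compl₁₂ (LinearMap.fst K L V) (LinearMap.fst K L V)).compr₂ (LinearMap.inl K L V) +
  ((ρ.compl₁₂ (LinearMap.fst K L V) (LinearMap.snd K L V)) -
    ((ρ ∘ₗ g).compl₁₂ (LinearMap.fst K L V) (h ∘ₗ LinearMap.snd K L V)).flip).compr₂
      (LinearMap.inr K L V)

/-- Matched-pair bracket
`[(x,a),(y,b)] = ([x,y] + h(a)y − h(b)x, [a,b]_V + ρ(x)b − ρ(y)a)`. -/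
noncomputable def mpBracket (b : L →ₗ[K] L →ₗ[K] L) (bV : V →ₗ[K] V →ₗ[K] V)
    (ρ : L →ₗ[K] V →ₗ[K] V) (h : V →ₗ[K] L →ₗ[K] L) :
    (L × V) →ₗ[K] (L × V) →ₗ[K] L × V :=
  (b.compl₁₂ (LinearMap.fst K L V) (LinearMap.fst K L V) +
    h.compl₁₂ (LinearMap.snd K L V) (LinearMap.fst K L V) -
    (h.compl₁₂ (LinearMap.snd K L V) (LinearMap.fst K L V)).flip).compr₂
      (LinearMap.inl K L V) +
  (bV.compl₁₂ (LinearMap.snd K L V) (LinearMap.snd K L V) +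
    ρ.compl₁₂ (LinearMap.fst K L V) (LinearMap.snd K L V) -
    (ρ.compl₁₂ (LinearMap.fst K L V) (LinearMap.snd K L V)).flip).compr₂
      (LinearMap.inr K L V)



lemma map_map_apply (f g f' g' : L →ₗ[K] L) (t : L ⊗[K] L) :
    TensorProduct.map f g (TensorProduct.map f' g' t)
      = TensorProduct.map (f ∘ₗ f') (g ∘ₗ g') t := by
  rw [← LinearMap.comp_apply, ← TensorProduct.map_comp]

lemma tau_map_apply (f g : L →ₗ[K] L) (t : L ⊗[K] L) :
    tau K L (TensorProduct.map f g t) = TensorProduct.map g f (tau K L t) := by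
  simp only [tau, LinearEquiv.coe_coe]
  exact (TensorProduct.map_comm g f t).symm

lemma cyc_map_apply (f g h : L →ₗ[K] L) (t : L ⊗[K] (L ⊗[K] L)) :
    cyc K L (TensorProduct.map f (TensorProduct.map g h) t)
      = TensorProduct.map h (TensorProduct.map f g) (cyc K L t) := by
  simp only [cyc, LinearMap.comp_apply, LinearEquiv.coe_coe]
  rw [← TensorProduct.map_map_assoc_symm]
  exact (TensorProduct.map_comm h (TensorProduct.map f g) _).symm

lemma map_cancel (e f : L ≃ₗ[K] L) (t : L ⊗[K] L) :
    TensorProduct.map e.symm.toLinearMap f.symm.toLinearMap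
      (TensorProduct.map e.toLinearMap f.toLinearMap t) = t := by
  induction t using TensorProduct.induction_on with
  | zero => simp
  | tmul a b => simp
  | add a b ha hb => simp [ha, hb]

theorem untwist_biHomLie_bialgebra (bb : L →ₗ[K] L →ₗ[K] L) (BL : L →ₗ[K] L ⊗[K] L)
    (α β : L ≃ₗ[K] L)
    (h1 : IsBiHomLie bb α.toLinearMap β.toLinearMap)
    (h2 : IsBiHomLieCoalg BL α.toLinearMap β.toLinearMap)
    (h3 : ∀ x y,
      BL (bb (α.symm (β x)) y) =
        TensorProduct.map (bb (α.symm (β (α x)))) β.toLinearMap (BL y) +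
          TensorProduct.map β.toLinearMap (bb (α.symm (α.symm (β (β (α x)))))) (BL y) -
          TensorProduct.map (bb (α.symm (β (α y)))) β.toLinearMap (BL x) -
          TensorProduct.map β.toLinearMap (bb (α.symm (α.symm (β (β (α y)))))) (BL x)) :
    IsLieAlg (bb.compl₁₂ α.symm.toLinearMap β.symm.toLinearMap) ∧
    IsLieCoalg (TensorProduct.map α.symm.toLinearMap β.symm.toLinearMap ∘ₗ BL) ∧
    IsLieBialgCocycle (bb.compl₁₂ α.symm.toLinearMap β.symm.toLinearMap)
      (TensorProduct.map α.symm.toLinearMap β.symm.toLinearMap ∘ₗ BL) := by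
  obtain ⟨hc, hαm, hβm, hskew, hjac⟩ := h1
  obtain ⟨-, hΔα, hΔβ, hco, hcoJ⟩ := h2
  simp only [LinearEquiv.coe_coe] at hc hαm hβm hskew hjac
  have cab : ∀ x : L, α (β x) = β (α x) := hc
  have caib : ∀ x : L, α (β.symm x) = β.symm (α x) := fun x =>
    β.injective (by rw [← cab, β.apply_symm_apply, β.apply_symm_apply])
  have ciab : ∀ x : L, α.symm (β x) = β (α.symm x) := fun x =>
    α.injective (by rw [α.apply_symm_apply, cab, α.apply_symm_apply])
  have ciaib : ∀ x : L, α.symm (β.symm x) = β.symm (α.symm x) := fun x =>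
    α.injective (by rw [α.apply_symm_apply, caib, α.apply_symm_apply])
  have hαim : ∀ x y : L, α.symm (bb x y) = bb (α.symm x) (α.symm y) := fun x y =>
    α.injective (by rw [α.apply_symm_apply, hαm, α.apply_symm_apply, α.apply_symm_apply])
  have hβim : ∀ x y : L, β.symm (bb x y) = bb (β.symm x) (β.symm y) := fun x y =>
    β.injective (by rw [β.apply_symm_apply, hβm, β.apply_symm_apply, β.apply_symm_apply])
  have hBLβi : ∀ x : L, BL (β.symm x)
      = TensorProduct.map β.symm.toLinearMap β.symm.toLinearMap (BL x) := by
    intro x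
    have h := LinearMap.congr_fun hΔβ (β.symm x)
    simp only [LinearMap.comp_apply, LinearEquiv.coe_coe, LinearEquiv.apply_symm_apply] at h
    calc BL (β.symm x)
        = TensorProduct.map β.symm.toLinearMap β.symm.toLinearMap
            (TensorProduct.map β.toLinearMap β.toLinearMap (BL (β.symm x))) :=
          (map_cancel β β _).symm
      _ = TensorProduct.map β.symm.toLinearMap β.symm.toLinearMap (BL x) := by rw [← h]
  refine ⟨⟨?_, ?_⟩, ⟨?_, ?_⟩, ?_⟩
  · -- antisymmetry
    intro x y
    have H := hskew (β.symm (α.symm x)) (α.symm (β.symm y))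
    simp only [cab, caib, ciab, ciaib, LinearEquiv.apply_symm_apply,
      LinearEquiv.symm_apply_apply] at H
    simp only [LinearMap.compl₁₂_apply, LinearEquiv.coe_coe]
    exact H
  · -- Jacobi
    intro x y z
    have H := hjac (β.symm (β.symm (α.symm x))) (β.symm (β.symm (α.symm y)))
      (α.symm (β.symm (β.symm z)))
    simp only [cab, caib, ciab, ciaib, LinearEquiv.apply_symm_apply,
      LinearEquiv.symm_apply_apply] at H
    simp only [LinearMap.compl₁₂_apply, LinearEquiv.coe_coe, hβim, ciaib]
    exact H
  · -- anti-cocommutativity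
    apply LinearMap.ext; intro x
    have hu := LinearMap.congr_fun hco x
    simp only [LinearMap.add_apply, LinearMap.comp_apply, LinearMap.zero_apply] at hu
    have e1 : (α.symm.toLinearMap ∘ₗ β.symm.toLinearMap) ∘ₗ β.toLinearMap
        = α.symm.toLinearMap := by ext z; simp
    have e2 : (α.symm.toLinearMap ∘ₗ β.symm.toLinearMap) ∘ₗ α.toLinearMap
        = β.symm.toLinearMap := by ext z; simp [ciaib]
    have key : TensorProduct.map α.symm.toLinearMap β.symm.toLinearMap (BL x)
        = TensorProduct.map (α.symm.toLinearMap ∘ₗ β.symm.toLinearMap)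
            (α.symm.toLinearMap ∘ₗ β.symm.toLinearMap)
            (TensorProduct.map β.toLinearMap α.toLinearMap (BL x)) := by
      rw [map_map_apply, e1, e2]
    simp only [LinearMap.add_apply, LinearMap.comp_apply, LinearMap.zero_apply]
    rw [key, tau_map_apply, ← map_add, hu, map_zero]
  · -- co-Jacobi
    set γ : L →ₗ[K] L := α.symm.toLinearMap ∘ₗ β.symm.toLinearMap ∘ₗ β.symm.toLinearMap
      with hγ
    have hcoA : ∀ x : L,
        coA0 (TensorProduct.map α.symm.toLinearMap β.symm.toLinearMap ∘ₗ BL) x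
          = TensorProduct.map γ (TensorProduct.map γ γ)
              (coA BL α.toLinearMap β.toLinearMap x) := by
      intro x
      simp only [coA0, coA, LinearMap.comp_apply]
      have e3 : γ ∘ₗ (β.toLinearMap ∘ₗ β.toLinearMap)
          = α.symm.toLinearMap ∘ₗ LinearMap.id (M := L) := by ext z; simp [hγ]
      have e4 : (TensorProduct.map γ γ) ∘ₗ (TensorProduct.map β.toLinearMap α.toLinearMap)
          = TensorProduct.map (α.symm.toLinearMap ∘ₗ β.symm.toLinearMap)
              (β.symm.toLinearMap ∘ₗ β.symm.toLinearMap) := by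
        rw [← TensorProduct.map_comp]
        congr 1
        · ext z; simp [hγ]
        · ext z; simp [hγ, ciaib]
      generalize BL x = t
      induction t using TensorProduct.induction_on with
      | zero => simp
      | add a b ha hb => simp only [map_add, ha, hb]
      | tmul a b =>
        simp only [TensorProduct.map_tmul, LinearMap.id_coe, id_eq, LinearMap.comp_apply,
          LinearEquiv.coe_coe]
        rw [hBLβi, map_map_apply, map_map_apply]
        congr 1
        · simp [hγ]
        · congr 1
          ext z w
          simp [hγ, ciaib]
    apply LinearMap.ext; intro x
    have hJ := LinearMap.congr_fun hcoJ x
    simp only [LinearMap.add_apply, LinearMap.comp_apply, LinearMap.zero_apply] at hJ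
    simp only [LinearMap.add_apply, LinearMap.comp_apply, LinearMap.zero_apply]
    rw [hcoA, cyc_map_apply, cyc_map_apply, ← map_add, ← map_add, hJ, map_zero]
  · -- cocycle
    intro x y
    have H := h3 (β.symm x) (β.symm y)
    simp only [cab, caib, ciab, ciaib, LinearEquiv.apply_symm_apply,
      LinearEquiv.symm_apply_apply] at H
    rw [hBLβi x, hBLβi y] at H
    have E1 : ∀ (w : L) (t : L ⊗[K] L),
        TensorProduct.map α.symm.toLinearMap β.symm.toLinearMap
          (TensorProduct.map (bb w) β.toLinearMap
            (TensorProduct.map β.symm.toLinearMap β.symm.toLinearMap t))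
        = TensorProduct.map ((bb.compl₁₂ α.symm.toLinearMap β.symm.toLinearMap) w)
            LinearMap.id (TensorProduct.map α.symm.toLinearMap β.symm.toLinearMap t) := by
      intro w t
      rw [map_map_apply, map_map_apply, map_map_apply]
      have c1 : (α.symm.toLinearMap ∘ₗ bb w) ∘ₗ β.symm.toLinearMap
          = (bb.compl₁₂ α.symm.toLinearMap β.symm.toLinearMap) w ∘ₗ α.symm.toLinearMap := by
        ext z
        simp only [LinearMap.comp_apply, LinearMap.compl₁₂_apply, LinearEquiv.coe_coe,
          hαim, ciaib]
      have c2 : (β.symm.toLinearMap ∘ₗ β.toLinearMap) ∘ₗ β.symm.toLinearMap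
          = LinearMap.id ∘ₗ β.symm.toLinearMap := by ext z; simp
      rw [c1, c2]
    have E2 : ∀ (w : L) (t : L ⊗[K] L),
        TensorProduct.map α.symm.toLinearMap β.symm.toLinearMap
          (TensorProduct.map β.toLinearMap (bb (β (α.symm w)))
            (TensorProduct.map β.symm.toLinearMap β.symm.toLinearMap t))
        = TensorProduct.map LinearMap.id
            ((bb.compl₁₂ α.symm.toLinearMap β.symm.toLinearMap) w)
            (TensorProduct.map α.symm.toLinearMap β.symm.toLinearMap t) := by
      intro w t
      rw [map_map_apply, map_map_apply, map_map_apply]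
      have c1 : (α.symm.toLinearMap ∘ₗ β.toLinearMap) ∘ₗ β.symm.toLinearMap
          = LinearMap.id ∘ₗ α.symm.toLinearMap := by ext z; simp
      have c2 : (β.symm.toLinearMap ∘ₗ bb (β (α.symm w))) ∘ₗ β.symm.toLinearMap
          = (bb.compl₁₂ α.symm.toLinearMap β.symm.toLinearMap) w ∘ₗ β.symm.toLinearMap := by
        ext z
        simp only [LinearMap.comp_apply, LinearMap.compl₁₂_apply, LinearEquiv.coe_coe,
          hβim, LinearEquiv.symm_apply_apply]
      rw [c1, c2]
    simp only [LinearMap.comp_apply, LinearMap.compl₁₂_apply, LinearEquiv.coe_coe]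
    rw [H]
    simp only [map_add, map_sub]
    rw [E1, E2, E1, E2]
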